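/- Fix q ∈ (0,1), set η_q := log(1/q) and g(x) := η_q·x²/2. Let h_n : ℝ → [0, +∞] be a family of weakly decreasing functions such that: (i) h_n(x) = +∞ for x < 0, there exists M > 0 with h_n(x) ∈ [0, M] for all x ≥ 0 and all n, and sup_{x ≥ 2} h_n(x) → 0 as n → ∞; (ii) for all ε > 0 there exist δ > 0 and n_ε such that for all n ≥ n_ε and all x, y ∈ [0, 2] with |x − y| ≤ δ one has |h_n(x) − h_n(y)| ≤ ε; (iii) every function arising as a pointwise limit of a subsequence of (h_n) is convex. Assume that (h_n ⊕ g)(x) converges pointwise to a function f that is proper, lower semicontinuous and convex. Then h_n converges pointwise to h := (f ⊖ g), one has f = g ⊕ h, the function h is continuous on [0, ∞), and f is differentiable on ℝ with derivative f' Lipschitz continuous with constant η_q. -/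

import Mathlib

open Filter Topology

/-- Convexity for an `EReal`-valued function on `ℝ`. -/
def ERealConvexOn (H : ℝ → EReal) : Prop :=
  ∀ a b t : ℝ, 0 ≤ t → t ≤ 1 →
    H (t * a + (1 - t) * b) ≤ (t : EReal) * H a + ((1 - t) : EReal) * H b

/-- The infimal convolution `(g ⊕ h)(x) = inf_y { g(y) + h(x − y) }`. -/
noncomputable def infConv (g : ℝ → ℝ) (h : ℝ → EReal) (x : ℝ) : EReal :=
  ⨅ y : ℝ, ((g y : EReal) + h (x - y))

/-- The infimal deconvolution `(f ⊖ g)(x) = sup_y { f(x − y) − g(y) }`. -/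
noncomputable def infDeconv (f : ℝ → EReal) (g : ℝ → ℝ) (x : ℝ) : EReal :=
  ⨆ y : ℝ, (f (x - y) - (g y : EReal))

/-- The parabola `g(x) = η_q·x²/2` with `η_q = log(1/q)`. -/
noncomputable def gPar (q : ℝ) (x : ℝ) : ℝ := Real.log (1 / q) * x ^ 2 / 2

open Set

/-!
Write `g x = η x² / 2` and view each `hₙ` as a real function `uₙ` on `[0, ∞)` extended by `+∞`.
The `uₙ` are bounded and asymptotically equicontinuous on `[0, ∞)`, so every subsequence has a
further subsequence converging pointwise, and then uniformly, to some `U`. Uniform convergence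
passes through the infimal convolution, hence `f = g ⊕ H` for the extension `H` of `U`, which is
convex and continuous on `[0, ∞)`. Such an `H` is recovered by deconvolution: `f ⊖ g ≤ H` because
`g` is even, and every affine minorant of `H` is touched from below by a translate of `g`, which
gives `H ≤ f ⊖ g` at the contact point. So all subsequential limits equal `f ⊖ g`.
Finally `f` is convex and `g - f`, a supremum of affine functions, is convex too; squeezed between
its tangent lines and tangent parabolas, `f` is differentiable with an `η`-Lipschitz derivative.
-/

noncomputable def parabola (η x : ℝ) : ℝ := η * x ^ 2 / 2

theorem EReal.le_of_forall_pos_le_add_coe {a b : EReal} (h : ∀ ε : ℝ, 0 < ε → a ≤ b + ε) :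
    a ≤ b := by
  induction b using EReal.rec with
  | bot => simpa using h 1 one_pos
  | coe b =>
    refine EReal.le_of_forall_lt_iff_le.1 fun z hz => ?_
    have := h (z - b) (by have : b < z := EReal.coe_lt_coe_iff.1 hz; linarith)
    rwa [← EReal.coe_add, add_sub_cancel] at this
  | top => exact le_top

theorem ConvexOn.add_rightDeriv_mul_sub_le {S : Set ℝ} {J : ℝ → ℝ} {x y : ℝ}
    (hJ : ConvexOn ℝ S J) (hx : x ∈ interior S) (hy : y ∈ S) :
    J x + derivWithin J (Ioi x) x * (y - x) ≤ J y := by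
  rcases lt_trichotomy y x with hyx | rfl | hxy
  · have h := (hJ.slope_le_leftDeriv_of_mem_interior hy hx hyx).trans
      (hJ.leftDeriv_le_rightDeriv_of_mem_interior hx)
    rw [slope_def_field, div_le_iff₀ (sub_pos.2 hyx)] at h
    linarith
  · simp
  · have h := hJ.rightDeriv_le_slope_of_mem_interior hx hy hxy
    rw [slope_def_field, le_div_iff₀ (sub_pos.2 hxy)] at h
    linarith

theorem eq_zero_of_forall_mul_le_mul_sq {d C : ℝ} (h : ∀ t, d * t ≤ C * t ^ 2) : d = 0 := by
  have h₁ := h (d / (2 * (|C| + 1)))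
  have h₂ : C * (d / (2 * (|C| + 1))) ^ 2 ≤ |C| * (d / (2 * (|C| + 1))) ^ 2 :=
    mul_le_mul_of_nonneg_right (le_abs_self C) (sq_nonneg _)
  field_simp at h₁ h₂
  nlinarith [sq_nonneg d, abs_nonneg C]

theorem hasDerivAt_of_abs_sub_le_mul_sq {F : ℝ → ℝ} {p x C : ℝ}
    (h : ∀ y, |F y - F x - p * (y - x)| ≤ C * (y - x) ^ 2) : HasDerivAt F p x := by
  rw [hasDerivAt_iff_isLittleO]
  have hO : (fun y => F y - F x - (y - x) • p) =O[𝓝 x] fun y => (y - x) ^ 2 :=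
    Asymptotics.IsBigO.of_bound C (Eventually.of_forall fun y => by
      simpa [Real.norm_eq_abs, mul_comm p] using h y)
  exact hO.trans_isLittleO <| (Asymptotics.isLittleO_pow_id one_lt_two).comp_tendsto
    (tendsto_sub_nhds_zero_iff.2 tendsto_id)

theorem abs_le_mul_abs_of_mul_nonneg_of_mul_le {a b η : ℝ} (hb : b ≠ 0) (h₀ : 0 ≤ a * b)
    (h₁ : a * b ≤ η * b ^ 2) : |a| ≤ η * |b| := by
  refine le_of_mul_le_mul_right ?_ (abs_pos.2 hb)
  rw [← abs_mul, abs_of_nonneg h₀, mul_assoc, abs_mul_abs_self, ← sq]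
  exact h₁

theorem ConvexOn.exists_hasDerivAt_of_convexOn_parabola_sub {F : ℝ → ℝ} {η : ℝ}
    (hF : ConvexOn ℝ univ F) (hG : ConvexOn ℝ univ fun x => parabola η x - F x) :
    ∃ F' : ℝ → ℝ, (∀ x, HasDerivAt F (F' x) x) ∧ ∀ x y, |F' x - F' y| ≤ η * |x - y| := by
  set p := fun x => derivWithin F (Ioi x) x
  set r := fun x => derivWithin (fun x => parabola η x - F x) (Ioi x) x
  have hp : ∀ x y, F x + p x * (y - x) ≤ F y := fun x y =>
    hF.add_rightDeriv_mul_sub_le (by simp) (mem_univ y)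
  have hr : ∀ x y, parabola η x - F x + r x * (y - x) ≤ parabola η y - F y := fun x y =>
    hG.add_rightDeriv_mul_sub_le (by simp) (mem_univ y)
  -- the tangent line below and the tangent parabola above meet at `x`, so their slopes agree
  have hpr : ∀ x, p x = η * x - r x := fun x => by
    have : p x - (η * x - r x) = 0 := eq_zero_of_forall_mul_le_mul_sq (C := η / 2) fun t => by
      have := hp x (x + t); have := hr x (x + t); simp only [parabola] at *; nlinarith
    linarith
  refine ⟨p, fun x => hasDerivAt_of_abs_sub_le_mul_sq (C := |η| / 2) fun y => abs_le.2 ⟨?_, ?_⟩,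
    fun x y => ?_⟩
  · have := hp x y; nlinarith [sq_nonneg (y - x), abs_nonneg η]
  · have := hr x y
    rw [hpr]; simp only [parabola] at this
    nlinarith [le_abs_self η, sq_nonneg (y - x)]
  · rcases eq_or_ne x y with rfl | hxy
    · simp
    refine abs_le_mul_abs_of_mul_nonneg_of_mul_le (sub_ne_zero.2 hxy) ?_ ?_
    · nlinarith [hp x y, hp y x]
    · have := hr x y; have := hr y x; rw [hpr, hpr]; simp only [parabola] at *; nlinarith

def EventuallyUniformEquicontinuousOn {ι X : Type*} [PseudoMetricSpace X] (u : ι → X → ℝ)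
    (l : Filter ι) (s : Set X) : Prop :=
  ∀ ε > 0, ∃ δ > 0, ∀ᶠ n in l, ∀ x ∈ s, ∀ y ∈ s, dist x y ≤ δ → dist (u n x) (u n y) ≤ ε

namespace EventuallyUniformEquicontinuousOn

variable {ι κ X : Type*} [PseudoMetricSpace X] {u : ι → X → ℝ} {l : Filter ι} {s : Set X}

theorem comp_tendsto (h : EventuallyUniformEquicontinuousOn u l s) {l' : Filter κ} {φ : κ → ι}
    (hφ : Tendsto φ l' l) : EventuallyUniformEquicontinuousOn (fun k => u (φ k)) l' s :=
  fun ε hε => let ⟨δ, hδ, hev⟩ := h ε hε; ⟨δ, hδ, hφ.eventually hev⟩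

theorem uniformContinuousOn_of_tendsto [l.NeBot] (h : EventuallyUniformEquicontinuousOn u l s)
    {U : X → ℝ} (hU : ∀ x ∈ s, Tendsto (fun n => u n x) l (𝓝 (U x))) :
    UniformContinuousOn U s := by
  refine Metric.uniformContinuousOn_iff_le.2 fun ε hε => ?_
  obtain ⟨δ, hδ, hev⟩ := h ε hε
  exact ⟨δ, hδ, fun x hx y hy hxy =>
    le_of_tendsto ((hU x hx).dist (hU y hy)) (hev.mono fun n hn => hn x hx y hy hxy)⟩

theorem tendstoUniformlyOn_of_tendsto [l.NeBot] (h : EventuallyUniformEquicontinuousOn u l s)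
    (hs : TotallyBounded s) {U : X → ℝ} (hU : ∀ x ∈ s, Tendsto (fun n => u n x) l (𝓝 (U x))) :
    TendstoUniformlyOn u U l s := by
  refine Metric.tendstoUniformlyOn_iff.2 fun ε hε => ?_
  obtain ⟨δ, hδ, hev⟩ := h (ε / 3) (by positivity)
  obtain ⟨δ', hδ', hUδ'⟩ := Metric.uniformContinuousOn_iff_le.1
    (h.uniformContinuousOn_of_tendsto hU) (ε / 3) (by positivity)
  obtain ⟨t, hts, htfin, hcover⟩ :=
    Metric.finite_approx_of_totallyBounded hs (min δ δ') (lt_min hδ hδ')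
  have hnet : ∀ᶠ n in l, ∀ y ∈ t, dist (U y) (u n y) < ε / 3 :=
    htfin.eventually_all.2 fun y hy =>
      (Metric.tendsto_nhds.1 (hU y (hts hy)) (ε / 3) (by positivity)).mono fun _ hn => by
        rwa [dist_comm]
  filter_upwards [hev, hnet] with n hequi hnet x hx
  obtain ⟨y, hyt, hxy⟩ := mem_iUnion₂.1 (hcover hx)
  have hxy := (Metric.mem_ball.1 hxy).le
  have h₁ := hUδ' x hx y (hts hyt) (hxy.trans (min_le_right _ _))
  have h₂ := hequi y (hts hyt) x hx (by rw [dist_comm]; exact hxy.trans (min_le_left _ _))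
  calc dist (U x) (u n x) ≤ dist (U x) (U y) + dist (U y) (u n y) + dist (u n y) (u n x) :=
        dist_triangle4 _ _ _ _
    _ < ε := by linarith [hnet y hyt]

theorem cauchySeq_of_subset_closure {u : ℕ → X → ℝ}
    (h : EventuallyUniformEquicontinuousOn u atTop s) {t : Set X} (hst : s ⊆ closure t)
    (hts : t ⊆ s) (ht : ∀ y ∈ t, CauchySeq fun n => u n y) {x : X} (hx : x ∈ s) :
    CauchySeq fun n => u n x := by
  refine Metric.cauchySeq_iff.2 fun ε hε => ?_
  obtain ⟨δ, hδ, hev⟩ := h (ε / 4) (by positivity)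
  obtain ⟨y, hyt, hxy⟩ := Metric.mem_closure_iff.1 (hst hx) δ hδ
  obtain ⟨N₁, hN₁⟩ := Metric.cauchySeq_iff.1 (ht y hyt) (ε / 4) (by positivity)
  obtain ⟨N₀, hN₀⟩ := eventually_atTop.1 hev
  have hnear : ∀ n ≥ N₀, dist (u n x) (u n y) ≤ ε / 4 := fun n hn =>
    hN₀ n hn x hx y (hts hyt) hxy.le
  refine ⟨max N₀ N₁, fun m hm n hn => ?_⟩
  have h₁ := hnear m (le_of_max_le_left hm)
  have h₂ := hnear n (le_of_max_le_left hn)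
  have h₃ := hN₁ m (le_of_max_le_right hm) n (le_of_max_le_right hn)
  calc dist (u m x) (u n x) ≤ dist (u m x) (u m y) + dist (u m y) (u n y) + dist (u n y) (u n x) :=
        dist_triangle4 _ _ _ _
    _ < ε := by rw [dist_comm (u n y)]; linarith

theorem exists_strictMono_tendsto [TopologicalSpace.SeparableSpace X] {u : ℕ → X → ℝ}
    (h : EventuallyUniformEquicontinuousOn u atTop s) {a b : ℝ}
    (hab : ∀ n, ∀ x ∈ s, u n x ∈ Icc a b) :
    ∃ φ : ℕ → ℕ, StrictMono φ ∧ ∃ U : X → ℝ,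
      ∀ x ∈ s, Tendsto (fun k => u (φ k) x) atTop (𝓝 (U x)) := by
  obtain ⟨t, hts, htc, hst⟩ := ((TopologicalSpace.isSeparable_univ_iff.2 ‹_›).mono
    (subset_univ s)).exists_countable_dense_subset
  have := htc.to_subtype
  -- Tychonoff: a subsequence converges at every point of the countable set `t`
  obtain ⟨V, -, φ, hφ, hV⟩ := isCompact_univ.tendsto_subseq
    (x := fun n (y : t) => (⟨u n y, hab n y (hts y.2)⟩ : Icc a b)) fun _ => mem_univ _
  have hcauchy : ∀ y ∈ t, CauchySeq fun k => u (φ k) y := fun y hy =>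
    ((continuous_subtype_val.tendsto _).comp (tendsto_pi_nhds.1 hV ⟨y, hy⟩)).cauchySeq
  exact ⟨φ, hφ, fun x => limUnder atTop fun k => u (φ k) x, fun x hx =>
    ((h.comp_tendsto hφ.tendsto_atTop).cauchySeq_of_subset_closure hst hts hcauchy hx
      ).tendsto_limUnder⟩

theorem Ici_of_Icc {u : ι → ℝ → ℝ} {a c : ℝ}
    (h : EventuallyUniformEquicontinuousOn u l (Icc a c))
    (htail : ∀ ε > 0, ∀ᶠ n in l, ∀ z, c ≤ z → |u n z| ≤ ε) :
    EventuallyUniformEquicontinuousOn u l (Ici a) := by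
  intro ε hε
  obtain ⟨δ, hδ, hev⟩ := h (ε / 2) (half_pos hε)
  refine ⟨δ, hδ, ?_⟩
  filter_upwards [hev, htail (ε / 4) (by positivity)] with n hequi hsmall
  have key : ∀ x ∈ Ici a, ∀ y ∈ Ici a, x ≤ y → dist x y ≤ δ → dist (u n x) (u n y) ≤ ε := by
    intro x hx y hy hxy hd
    rcases le_or_gt y c with hyc | hcy
    · exact (hequi x ⟨hx, hxy.trans hyc⟩ y ⟨hy, hyc⟩ hd).trans (half_le_self hε.le)
    have hy' := hsmall y hcy.le
    rw [Real.dist_eq]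
    rcases le_or_gt x c with hxc | hcx
    · have hxc' : dist x c ≤ dist x y := by
        simp only [Real.dist_eq, abs_of_nonpos (sub_nonpos.2 hxc),
          abs_of_nonpos (sub_nonpos.2 hxy)]
        linarith
      have h₁ := hequi x ⟨hx, hxc⟩ c ⟨hx.trans hxc, le_rfl⟩ (hxc'.trans hd)
      rw [Real.dist_eq] at h₁
      linarith [abs_sub_le (u n x) (u n c) (u n y), abs_sub (u n c) (u n y), hsmall c le_rfl]
    · linarith [abs_sub (u n x) (u n y), hsmall x hcx.le]
  intro x hx y hy hd
  rcases le_total x y with hxy | hyx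
  · exact key x hx y hy hxy hd
  · rw [dist_comm] at hd ⊢
    exact key y hy x hx hyx hd

theorem tendstoUniformlyOn_Ici [l.NeBot] {u : ι → ℝ → ℝ} {a c : ℝ}
    (h : EventuallyUniformEquicontinuousOn u l (Icc a c))
    (htail : ∀ ε > 0, ∀ᶠ n in l, ∀ z, c ≤ z → |u n z| ≤ ε) {U : ℝ → ℝ}
    (hU : ∀ x ∈ Ici a, Tendsto (fun n => u n x) l (𝓝 (U x))) :
    TendstoUniformlyOn u U l (Ici a) := by
  have hIcc := Metric.tendstoUniformlyOn_iff.1 <|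
    h.tendstoUniformlyOn_of_tendsto isCompact_Icc.totallyBounded fun x hx => hU x hx.1
  refine Metric.tendstoUniformlyOn_iff.2 fun ε hε => ?_
  filter_upwards [hIcc ε hε, htail (ε / 3) (by positivity)] with n h₁ h₂ x hx
  rcases le_or_gt x c with hxc | hcx
  · exact h₁ x ⟨hx, hxc⟩
  have hUx : |U x| ≤ ε / 3 :=
    le_of_tendsto (hU x hx).abs ((htail (ε / 3) (by positivity)).mono fun n hn => hn x hcx.le)
  rw [Real.dist_eq]
  linarith [abs_sub (U x) (u n x), h₂ x hcx.le]

end EventuallyUniformEquicontinuousOn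

theorem infConv_le_add (g : ℝ → ℝ) (H : ℝ → EReal) (x z : ℝ) :
    infConv g H x ≤ g (x - z) + H z := by
  simpa [infConv] using iInf_le (fun y => (g y : EReal) + H (x - y)) (x - z)

theorem infConv_le_infConv_add {g : ℝ → ℝ} {H₁ H₂ : ℝ → EReal} {ε : ℝ}
    (h : ∀ z, H₁ z ≤ H₂ z + ε) (x : ℝ) : infConv g H₁ x ≤ infConv g H₂ x + ε := by
  rw [← EReal.sub_le_iff_le_add (.inl (EReal.coe_ne_bot ε)) (.inl (EReal.coe_ne_top ε))]
  refine le_iInf fun y => ?_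
  rw [EReal.sub_le_iff_le_add (.inl (EReal.coe_ne_bot ε)) (.inl (EReal.coe_ne_top ε)), add_assoc]
  exact (iInf_le _ y).trans (add_le_add le_rfl (h _))

theorem eq_infConv_of_tendsto {ι : Type*} {l : Filter ι} [l.NeBot] {g : ℝ → ℝ}
    {Hn : ι → ℝ → EReal} {H f : ℝ → EReal}
    (hH : ∀ ε : ℝ, 0 < ε → ∀ᶠ n in l, ∀ z, Hn n z ≤ H z + ε ∧ H z ≤ Hn n z + ε)
    (hf : ∀ x, Tendsto (fun n => infConv g (Hn n) x) l (𝓝 (f x))) : f = infConv g H := by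
  funext x
  refine le_antisymm (EReal.le_of_forall_pos_le_add_coe fun ε hε => ?_)
    (EReal.le_of_forall_pos_le_add_coe fun ε hε => ?_)
  · exact le_of_tendsto (hf x) <|
      (hH ε hε).mono fun n hn => infConv_le_infConv_add (fun z => (hn z).1) x
  · rw [← EReal.sub_le_iff_le_add (.inl (EReal.coe_ne_bot ε)) (.inl (EReal.coe_ne_top ε))]
    refine ge_of_tendsto (hf x) <| (hH ε hε).mono fun n hn => ?_
    rw [EReal.sub_le_iff_le_add (.inl (EReal.coe_ne_bot ε)) (.inl (EReal.coe_ne_top ε))]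
    exact infConv_le_infConv_add (fun z => (hn z).2) x

theorem le_infDeconv (f : ℝ → EReal) (g : ℝ → ℝ) (x w : ℝ) :
    f w - g (x - w) ≤ infDeconv f g x := by
  simpa [infDeconv] using le_iSup (fun y => f (x - y) - (g y : EReal)) (x - w)

theorem infDeconv_infConv_le {g : ℝ → ℝ} (hg : ∀ y, g (-y) = g y) (H : ℝ → EReal) (x : ℝ) :
    infDeconv (infConv g H) g x ≤ H x :=
  iSup_le fun y => EReal.sub_le_of_le_add' <| by simpa [hg] using infConv_le_add g H (x - y) x

theorem le_infDeconv_infConv_parabola {η : ℝ} (hη : 0 < η) {H : ℝ → EReal} {a q x : ℝ}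
    (h : ∀ z, ((a + q * (z - x) : ℝ) : EReal) ≤ H z) :
    (a : EReal) ≤ infDeconv (infConv (parabola η) H) (parabola η) x := by
  -- `w` is chosen so that `z ↦ parabola η (w - z)` has slope `-q` at `x`
  set w := x + q / η
  have hq : q = η * (w - x) := by simp only [w]; field_simp; ring
  have hw : ((parabola η (w - x) + a : ℝ) : EReal) ≤ infConv (parabola η) H w := by
    refine le_iInf fun y => le_trans ?_ (add_le_add le_rfl (h (w - y)))
    rw [← EReal.coe_add, EReal.coe_le_coe_iff, hq]
    simp only [parabola]
    nlinarith [mul_nonneg hη.le (sq_nonneg (y - (w - x)))]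
  calc (a : EReal) = ((parabola η (w - x) + a : ℝ) : EReal) - (parabola η (x - w) : ℝ) := by
        rw [← EReal.coe_sub]; simp only [parabola]; ring_nf
    _ ≤ infConv (parabola η) H w - (parabola η (x - w) : ℝ) := EReal.sub_le_sub hw le_rfl
    _ ≤ _ := le_infDeconv _ _ x w

noncomputable def extendByTop (u : ℝ → ℝ) (z : ℝ) : EReal := if 0 ≤ z then (u z : EReal) else ⊤

section extendByTop

variable {u v : ℝ → ℝ} {z : ℝ}

@[simp]
theorem extendByTop_of_nonneg (hz : 0 ≤ z) : extendByTop u z = u z := if_pos hz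

@[simp]
theorem extendByTop_of_neg (hz : z < 0) : extendByTop u z = ⊤ := if_neg hz.not_ge

theorem eq_extendByTop_toReal {H : ℝ → EReal} (hneg : ∀ z < 0, H z = ⊤)
    (hfin : ∀ z, 0 ≤ z → H z ≠ ⊤ ∧ H z ≠ ⊥) : H = extendByTop fun z => (H z).toReal := by
  funext z
  rcases lt_or_ge z 0 with hz | hz
  · rw [hneg z hz, extendByTop_of_neg hz]
  · rw [extendByTop_of_nonneg hz, EReal.coe_toReal (hfin z hz).1 (hfin z hz).2]

theorem extendByTop_le_add {ε : ℝ} (h : ∀ z, 0 ≤ z → u z ≤ v z + ε) (z : ℝ) :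
    extendByTop u z ≤ extendByTop v z + ε := by
  rcases lt_or_ge z 0 with hz | hz
  · simp [hz]
  · simpa [hz, ← EReal.coe_add] using h z hz

theorem tendsto_extendByTop {ι : Type*} {l : Filter ι} {un : ι → ℝ → ℝ}
    (h : ∀ z, 0 ≤ z → Tendsto (fun n => un n z) l (𝓝 (u z))) (z : ℝ) :
    Tendsto (fun n => extendByTop (un n) z) l (𝓝 (extendByTop u z)) := by
  rcases lt_or_ge z 0 with hz | hz
  · simpa [hz] using tendsto_const_nhds
  · simp only [extendByTop_of_nonneg hz]
    exact (continuous_coe_real_ereal.tendsto _).comp (h z hz)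

theorem continuousOn_extendByTop (h : ContinuousOn u (Ici 0)) :
    ContinuousOn (extendByTop u) (Ici 0) :=
  (continuous_coe_real_ereal.comp_continuousOn h).congr fun _ hz => extendByTop_of_nonneg hz

theorem ERealConvexOn.convexOn {H : ℝ → EReal} {F : ℝ → ℝ} {s : Set ℝ} (h : ERealConvexOn H)
    (hs : Convex ℝ s) (hF : ∀ x ∈ s, H x = F x) : ConvexOn ℝ s F := by
  refine ⟨hs, fun a ha b hb t t' ht ht' htt' => ?_⟩
  obtain rfl : t' = 1 - t := by linarith
  have hab := hs ha hb ht ht' htt'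
  have := h a b t ht (by linarith)
  simp only [smul_eq_mul] at hab ⊢
  rw [hF a ha, hF b hb, hF _ hab] at this
  exact_mod_cast this

theorem infConv_extendByTop_ne_top (g : ℝ → ℝ) (x : ℝ) : infConv g (extendByTop u) x ≠ ⊤ :=
  ne_top_of_le_ne_top (by simp [← EReal.coe_add]) (infConv_le_add g (extendByTop u) x 0)

end extendByTop

theorem ConvexOn.exists_affine_minorant {u : ℝ → ℝ} (hconv : ConvexOn ℝ (Ici 0) u)
    (hu : ∀ z, 0 ≤ z → 0 ≤ u z) (hcont : ContinuousWithinAt u (Ici 0) 0) {x ε : ℝ} (hx : 0 ≤ x)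
    (hε : 0 < ε) : ∃ q : ℝ, ∀ z, 0 ≤ z → u x - ε + q * (z - x) ≤ u z := by
  rcases hx.eq_or_lt with rfl | hx
  · obtain ⟨δ, hδ, hnear⟩ := Metric.continuousWithinAt_iff.1 hcont ε hε
    refine ⟨-(u 0 / δ), fun z hz => ?_⟩
    have hu0 := hu 0 le_rfl
    rcases lt_or_ge z δ with hzδ | hδz
    · have hclose := hnear hz (by rwa [Real.dist_eq, sub_zero, abs_of_nonneg hz])
      rw [Real.dist_eq] at hclose
      have : 0 ≤ u 0 / δ * z := by positivity
      linarith [abs_lt.1 hclose]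
    · have : u 0 ≤ u 0 / δ * z := by
        rw [div_mul_eq_mul_div, le_div_iff₀ hδ]; exact mul_le_mul_of_nonneg_left hδz hu0
      linarith [hu z hz]
  · refine ⟨derivWithin u (Ioi x) x, fun z hz => ?_⟩
    have := hconv.add_rightDeriv_mul_sub_le (by rwa [interior_Ici]) (mem_Ici.2 hz)
    linarith

theorem infDeconv_infConv_parabola_extendByTop {η : ℝ} (hη : 0 < η) {u : ℝ → ℝ}
    (hu : ∀ z, 0 ≤ z → 0 ≤ u z) (hconv : ConvexOn ℝ (Ici 0) u)
    (hcont : ContinuousWithinAt u (Ici 0) 0) :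
    infDeconv (infConv (parabola η) (extendByTop u)) (parabola η) = extendByTop u := by
  funext x
  refine le_antisymm (infDeconv_infConv_le (fun y => by simp [parabola]) _ x) ?_
  rcases lt_or_ge x 0 with hx | hx
  · -- left of `0`, `extendByTop u` has affine minorants of arbitrary height at `x`
    rw [extendByTop_of_neg hx, top_le_iff, EReal.eq_top_iff_forall_lt]
    intro a
    refine (EReal.coe_lt_coe_iff.2 (lt_add_one a)).trans_le <|
      le_infDeconv_infConv_parabola hη (q := min 0 ((a + 1) / x)) fun z => ?_
    rcases lt_or_ge z 0 with hz | hz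
    · simp [hz]
    rw [extendByTop_of_nonneg hz, EReal.coe_le_coe_iff]
    have h₁ : (a + 1) / x * x = a + 1 := div_mul_cancel₀ _ hx.ne
    have h₂ : min 0 ((a + 1) / x) * (z - x) ≤ min 0 ((a + 1) / x) * (-x) :=
      mul_le_mul_of_nonpos_left (by linarith) (min_le_left _ _)
    have h₃ : min 0 ((a + 1) / x) * (-x) ≤ (a + 1) / x * (-x) :=
      mul_le_mul_of_nonneg_right (min_le_right _ _) (by linarith)
    linarith [hu z hz]
  · rw [extendByTop_of_nonneg hx]
    refine EReal.le_of_forall_pos_le_add_coe fun ε hε => ?_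
    obtain ⟨q, hq⟩ := hconv.exists_affine_minorant hu hcont hx hε
    have := le_infDeconv_infConv_parabola hη (H := extendByTop u) (a := u x - ε) fun z => by
      rcases lt_or_ge z 0 with hz | hz
      · simp [hz]
      · rw [extendByTop_of_nonneg hz, EReal.coe_le_coe_iff]; exact hq z hz
    calc (u x : EReal) = ((u x - ε : ℝ) : EReal) + ε := by rw [← EReal.coe_add, sub_add_cancel]
      _ ≤ _ := add_le_add this le_rfl

theorem convexOn_parabola_sub_of_infConv_eq {η : ℝ} {H : ℝ → EReal} {F : ℝ → ℝ}
    (hF : ∀ x, infConv (parabola η) H x = F x) : ConvexOn ℝ univ fun x => parabola η x - F x := by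
  refine ⟨convex_univ, fun a _ b _ s t hs ht hst => ?_⟩
  have key : s * F a + t * F b - η * s * t * (a - b) ^ 2 / 2 ≤ F (s * a + t * b) := by
    rw [← EReal.coe_le_coe_iff, ← hF]
    refine le_iInf fun y => ?_
    have hFa := hF a ▸ infConv_le_add _ H a (s * a + t * b - y)
    have hFb := hF b ▸ infConv_le_add _ H b (s * a + t * b - y)
    generalize H (s * a + t * b - y) = v at hFa hFb ⊢
    induction v using EReal.rec with
    | bot => simp at hFa
    | top => simp
    | coe v =>
      rw [← EReal.coe_add, EReal.coe_le_coe_iff] at hFa hFb ⊢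
      obtain rfl : t = 1 - s := by linarith
      simp only [parabola] at hFa hFb ⊢
      nlinarith [mul_le_mul_of_nonneg_left hFa hs, mul_le_mul_of_nonneg_left hFb ht]
  obtain rfl : t = 1 - s := by linarith
  simp only [smul_eq_mul, parabola]
  nlinarith [key]

theorem eq_infConv_extendByTop_of_tendsto {g : ℝ → ℝ} {c : ℝ} {u : ℕ → ℝ → ℝ} {U : ℝ → ℝ}
    {f : ℝ → EReal} (hequi : EventuallyUniformEquicontinuousOn u atTop (Icc 0 c))
    (htail : ∀ ε > 0, ∀ᶠ n in atTop, ∀ z, c ≤ z → |u n z| ≤ ε)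
    (hU : ∀ z ∈ Ici 0, Tendsto (fun n => u n z) atTop (𝓝 (U z)))
    (hf : ∀ x, Tendsto (fun n => infConv g (extendByTop (u n)) x) atTop (𝓝 (f x))) :
    f = infConv g (extendByTop U) := by
  have hunif := Metric.tendstoUniformlyOn_iff.1 (hequi.tendstoUniformlyOn_Ici htail hU)
  refine eq_infConv_of_tendsto (fun ε hε => ?_) hf
  filter_upwards [hunif ε hε] with n hn z
  have hclose : ∀ z, 0 ≤ z → |U z - u n z| < ε := fun z hz => by
    simpa [Real.dist_eq] using hn z hz
  exact ⟨extendByTop_le_add (fun z hz => by linarith [abs_lt.1 (hclose z hz)]) z,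
    extendByTop_le_add (fun z hz => by linarith [abs_lt.1 (hclose z hz)]) z⟩

theorem eq_infConv_and_infDeconv_eq_of_tendsto {η c : ℝ} (hη : 0 < η) {u : ℕ → ℝ → ℝ}
    {U : ℝ → ℝ} {f : ℝ → EReal} (hu : ∀ n z, 0 ≤ z → 0 ≤ u n z)
    (hequi : EventuallyUniformEquicontinuousOn u atTop (Icc 0 c))
    (htail : ∀ ε > 0, ∀ᶠ n in atTop, ∀ z, c ≤ z → |u n z| ≤ ε)
    (hU : ∀ z ∈ Ici 0, Tendsto (fun n => u n z) atTop (𝓝 (U z))) (hconv : ConvexOn ℝ (Ici 0) U)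
    (hf : ∀ x, Tendsto (fun n => infConv (parabola η) (extendByTop (u n)) x) atTop (𝓝 (f x))) :
    f = infConv (parabola η) (extendByTop U) ∧ infDeconv f (parabola η) = extendByTop U := by
  have hfU := eq_infConv_extendByTop_of_tendsto hequi htail hU hf
  have hcont := (hequi.Ici_of_Icc htail).uniformContinuousOn_of_tendsto hU
  have hU0 : ∀ z, 0 ≤ z → 0 ≤ U z := fun z hz => ge_of_tendsto' (hU z hz) fun n => hu n z hz
  refine ⟨hfU, ?_⟩
  rw [hfU]
  exact infDeconv_infConv_parabola_extendByTop hη hU0 hconv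
    (hcont.continuousOn 0 (mem_Ici.2 le_rfl))

theorem exists_tendsto_extendByTop_eq_infDeconv {η c M : ℝ} (hη : 0 < η) {u : ℕ → ℝ → ℝ}
    {f : ℝ → EReal} (hu : ∀ n z, 0 ≤ z → u n z ∈ Icc 0 M)
    (hequi : EventuallyUniformEquicontinuousOn u atTop (Icc 0 c))
    (htail : ∀ ε > 0, ∀ᶠ n in atTop, ∀ z, c ≤ z → |u n z| ≤ ε)
    (hsubconv : ∀ φ : ℕ → ℕ, StrictMono φ → ∀ H : ℝ → EReal,
      (∀ x, Tendsto (fun k => extendByTop (u (φ k)) x) atTop (𝓝 (H x))) → ERealConvexOn H)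
    (hf : ∀ x, Tendsto (fun n => infConv (parabola η) (extendByTop (u n)) x) atTop (𝓝 (f x))) :
    ∃ U : ℝ → ℝ, infDeconv f (parabola η) = extendByTop U ∧
      f = infConv (parabola η) (extendByTop U) ∧ ContinuousOn U (Ici 0) ∧
      ∀ x, Tendsto (fun n => extendByTop (u n) x) atTop (𝓝 (extendByTop U x)) := by
  have hequiIci := hequi.Ici_of_Icc htail
  have hsubseq : ∀ ψ : ℕ → ℕ, StrictMono ψ → ∃ φ : ℕ → ℕ, StrictMono φ ∧ ∃ U : ℝ → ℝ,
      ∀ z ∈ Ici 0, Tendsto (fun k => u (ψ (φ k)) z) atTop (𝓝 (U z)) := fun ψ hψ =>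
    (hequiIci.comp_tendsto hψ.tendsto_atTop).exists_strictMono_tendsto fun n z hz => hu (ψ n) z hz
  have hlimit : ∀ ψ : ℕ → ℕ, StrictMono ψ → ∀ U : ℝ → ℝ,
      (∀ z ∈ Ici 0, Tendsto (fun k => u (ψ k) z) atTop (𝓝 (U z))) →
      f = infConv (parabola η) (extendByTop U) ∧ infDeconv f (parabola η) = extendByTop U :=
    fun ψ hψ U hU => eq_infConv_and_infDeconv_eq_of_tendsto hη (fun n z hz => (hu (ψ n) z hz).1)
      (hequi.comp_tendsto hψ.tendsto_atTop)
      (fun ε hε => hψ.tendsto_atTop.eventually (htail ε hε)) hU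
      ((hsubconv ψ hψ _ (tendsto_extendByTop hU)).convexOn (convex_Ici 0)
        fun _ hz => extendByTop_of_nonneg hz)
      fun x => (hf x).comp hψ.tendsto_atTop
  obtain ⟨φ, hφ, U, hU⟩ := hsubseq id strictMono_id
  obtain ⟨hfU, hhU⟩ := hlimit φ hφ U hU
  refine ⟨U, hhU, hfU, ((hequiIci.comp_tendsto hφ.tendsto_atTop).uniformContinuousOn_of_tendsto
    hU).continuousOn, fun x => tendsto_of_subseq_tendsto fun ns hns => ?_⟩
  -- every subsequence has a further subsequence with limit `f ⊖ g = extendByTop U`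
  obtain ⟨ψ, -, hψ⟩ := strictMono_subseq_of_tendsto_atTop hns
  obtain ⟨φ', hφ', U', hU'⟩ := hsubseq _ hψ
  obtain ⟨-, hhU'⟩ := hlimit _ (hψ.comp hφ') U' hU'
  exact ⟨ψ ∘ φ', hhU ▸ hhU' ▸ tendsto_extendByTop hU' x⟩

theorem deconvolution_lemma_general (q : ℝ) (hq : q ∈ Set.Ioo (0 : ℝ) 1)
    (hn : ℕ → ℝ → EReal)
    (hneg : ∀ n, ∀ x : ℝ, x < 0 → hn n x = ⊤)
    (M : ℝ)
    (hbdd : ∀ n, ∀ x : ℝ, 0 ≤ x → hn n x ∈ Set.Icc (0 : EReal) (M : EReal))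
    (hsup : ∀ ε : ℝ, 0 < ε → ∃ N, ∀ n ≥ N, ∀ x : ℝ, 2 ≤ x → hn n x ≤ (ε : EReal))
    (hequi : ∀ ε : ℝ, 0 < ε → ∃ δ > (0 : ℝ), ∃ N, ∀ n ≥ N,
      ∀ x ∈ Set.Icc (0 : ℝ) 2, ∀ y ∈ Set.Icc (0 : ℝ) 2,
        |x - y| ≤ δ → |(hn n x).toReal - (hn n y).toReal| ≤ ε)
    (hsubconv : ∀ φ : ℕ → ℕ, StrictMono φ → ∀ H : ℝ → EReal,
      (∀ x, Tendsto (fun k => hn (φ k) x) atTop (nhds (H x))) → ERealConvexOn H)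
    (f : ℝ → EReal)
    (hproper : (∀ x, f x ≠ ⊥) ∧ ∃ x, f x ≠ ⊤)
    (hfconv : ERealConvexOn f)
    (hconvlim : ∀ x, Tendsto (fun n => infConv (gPar q) (hn n) x) atTop (nhds (f x))) :
    (∀ x, Tendsto (fun n => hn n x) atTop (nhds (infDeconv f (gPar q) x))) ∧
    (∀ x, f x = infConv (gPar q) (infDeconv f (gPar q)) x) ∧
    ContinuousOn (infDeconv f (gPar q)) (Set.Ici 0) ∧
    ∃ F F' : ℝ → ℝ, (∀ x, f x = (F x : EReal)) ∧ (∀ x, HasDerivAt F (F' x) x) ∧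
      ∀ x y : ℝ, |F' x - F' y| ≤ Real.log (1 / q) * |x - y| := by
  have hη : 0 < Real.log (1 / q) := Real.log_pos <| by
    rw [one_div]; exact one_lt_inv₀ hq.1 |>.2 hq.2
  obtain ⟨u, rfl⟩ : ∃ u : ℕ → ℝ → ℝ, hn = fun n => extendByTop (u n) :=
    ⟨_, funext fun n => eq_extendByTop_toReal (hneg n) fun z hz =>
      ⟨ne_top_of_le_ne_top (EReal.coe_ne_top M) (hbdd n z hz).2,
        ne_bot_of_le_ne_bot EReal.zero_ne_bot (hbdd n z hz).1⟩⟩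
  have hu : ∀ n z, 0 ≤ z → u n z ∈ Icc 0 M := fun n z hz => by simpa [hz] using hbdd n z hz
  have htail : ∀ ε > 0, ∀ᶠ n in atTop, ∀ z, 2 ≤ z → |u n z| ≤ ε := fun ε hε => by
    obtain ⟨N, hN⟩ := hsup ε hε
    refine eventually_atTop.2 ⟨N, fun n hn z hz => abs_le.2 ⟨?_, ?_⟩⟩
    · linarith [(hu n z (by linarith)).1]
    · simpa [zero_le_two.trans hz] using hN n hn z hz
  have hequiIcc : EventuallyUniformEquicontinuousOn u atTop (Icc 0 2) := fun ε hε => by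
    obtain ⟨δ, hδ, N, hN⟩ := hequi ε hε
    refine ⟨δ, hδ, eventually_atTop.2 ⟨N, fun n hn x hx y hy hxy => ?_⟩⟩
    simpa [Real.dist_eq, hx.1, hy.1] using hN n hn x hx y hy (by rwa [← Real.dist_eq])
  rw [show gPar q = parabola (Real.log (1 / q)) from rfl] at hconvlim ⊢
  obtain ⟨U, hhU, hfU, hUcont, hlim⟩ :=
    exists_tendsto_extendByTop_eq_infDeconv hη hu hequiIcc htail hsubconv hconvlim
  refine ⟨fun x => hhU ▸ hlim x, fun x => by rw [hhU, ← hfU],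
    hhU ▸ continuousOn_extendByTop hUcont, ?_⟩
  have hfin : ∀ x, f x = (f x).toReal := fun x => by
    rw [EReal.coe_toReal (hfU ▸ infConv_extendByTop_ne_top _ x) (hproper.1 x)]
  obtain ⟨F', hF', hlip⟩ := (hfconv.convexOn convex_univ fun x _ => hfin x
    ).exists_hasDerivAt_of_convexOn_parabola_sub
    (convexOn_parabola_sub_of_infConv_eq fun x => (congrFun hfU x).symm.trans (hfin x))
  exact ⟨_, F', hfin, hF', hlip⟩

/-- Deconvolution lemma: if weakly decreasing `h_n` (equal to `+∞` on `(−∞,0)`, uniformly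
bounded on `[0,∞)`, with `sup_{x≥2} h_n → 0`, asymptotically equicontinuous on `[0,2]`,
with all subsequential pointwise limits convex) are such that `h_n ⊕ g` converges pointwise
to a proper lower semicontinuous convex `f`, then `h_n` converges pointwise to
`h = f ⊖ g`; moreover `f = g ⊕ h`, `h` is continuous on `[0,∞)`, and `f` is differentiable
with `η_q`-Lipschitz derivative. -/
theorem deconvolution_lemma (q : ℝ) (hq : q ∈ Set.Ioo (0 : ℝ) 1)
    (hn : ℕ → ℝ → EReal)
    (hanti : ∀ n, Antitone (hn n))
    (hneg : ∀ n, ∀ x : ℝ, x < 0 → hn n x = ⊤)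
    (M : ℝ) (hM : 0 < M)
    (hbdd : ∀ n, ∀ x : ℝ, 0 ≤ x → hn n x ∈ Set.Icc (0 : EReal) (M : EReal))
    (hsup : ∀ ε : ℝ, 0 < ε → ∃ N, ∀ n ≥ N, ∀ x : ℝ, 2 ≤ x → hn n x ≤ (ε : EReal))
    (hequi : ∀ ε : ℝ, 0 < ε → ∃ δ > (0 : ℝ), ∃ N, ∀ n ≥ N,
      ∀ x ∈ Set.Icc (0 : ℝ) 2, ∀ y ∈ Set.Icc (0 : ℝ) 2,
        |x - y| ≤ δ → |(hn n x).toReal - (hn n y).toReal| ≤ ε)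
    (hsubconv : ∀ φ : ℕ → ℕ, StrictMono φ → ∀ H : ℝ → EReal,
      (∀ x, Tendsto (fun k => hn (φ k) x) atTop (nhds (H x))) → ERealConvexOn H)
    (f : ℝ → EReal)
    (hproper : (∀ x, f x ≠ ⊥) ∧ ∃ x, f x ≠ ⊤)
    (hlsc : LowerSemicontinuous f)
    (hfconv : ERealConvexOn f)
    (hconvlim : ∀ x, Tendsto (fun n => infConv (gPar q) (hn n) x) atTop (nhds (f x))) :
    (∀ x, Tendsto (fun n => hn n x) atTop (nhds (infDeconv f (gPar q) x))) ∧
    (∀ x, f x = infConv (gPar q) (infDeconv f (gPar q)) x) ∧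
    ContinuousOn (infDeconv f (gPar q)) (Set.Ici 0) ∧
    ∃ F F' : ℝ → ℝ, (∀ x, f x = (F x : EReal)) ∧ (∀ x, HasDerivAt F (F' x) x) ∧
      ∀ x y : ℝ, |F' x - F' y| ≤ Real.log (1 / q) * |x - y| :=
  deconvolution_lemma_general q hq hn hneg M hbdd hsup hequi hsubconv f hproper hfconv hconvlim
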